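/- Let E_h, E_x, E_y, H be finite-dimensional real inner product spaces, f : E_h × E_x × H → E_h a C¹ transition map, g : E_h → E_y a C¹ prediction map, x₁, …, x_L ∈ E_x inputs, targets y₁, …, y_L ∈ E_y, and θ ∈ H. Write fₖ(h) = f(h, xₖ, θ), μ_{j,i} = f_j ∘ ⋯ ∘ fᵢ (identity for j < i), let hⱼ denote the layer-j hidden state, ŷⱼ = g(hⱼ), eⱼ = ŷⱼ − yⱼ, and define the backpropagated errors εᵢ := Σ_{j=i}^{L} D*μ_{j,i+1}(hᵢ) · D*g(hⱼ) · eⱼ for i ∈ {1, …, L} and ε_{L+1} := 0. Then for all i ∈ {1, …, L}, εᵢ = D*f_{i+1}(hᵢ) · ε_{i+1} + D*g(hᵢ) · eᵢ (with the f_{L+1} term vanishing when i = L). -/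

import Mathlib

/-!
Peeling the first map off the chain, `μ_{j,i+1} = μ_{j,i+2} ∘ f_{i+1}`, and the chain rule give
`D*μ_{j,i+1}(hᵢ) = D*f_{i+1}(hᵢ) ∘ D*μ_{j,i+2}(h_{i+1})` for `j > i`. Splitting the `j = i` term
(where `μ_{i,i+1} = id`) off the sum defining `εᵢ` and factoring `D*f_{i+1}(hᵢ)` out of the rest
leaves exactly `ε_{i+1}`.
-/

/-- `muChain f i j = μ_{j,i} = f_j ∘ ⋯ ∘ f_i` for `i ≤ j`, and the identity for `j < i`
(indices are 1-based: `muChain f i 0 = id`). -/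
def muChain {E : Type*} (f : ℕ → E → E) (i : ℕ) : ℕ → E → E
  | 0 => id
  | j + 1 => if j + 1 < i then id else f (j + 1) ∘ muChain f i j

section muChain

variable {E : Type*}

theorem muChain_of_lt (f : ℕ → E → E) {i j : ℕ} (h : j < i) : muChain f i j = id := by
  induction j with
  | zero => rfl
  | succ n _ => simp [muChain, h]

theorem muChain_eq_comp (f : ℕ → E → E) {i j : ℕ} (hi : 0 < i) (hij : i ≤ j) :
    muChain f i j = muChain f (i + 1) j ∘ f i := by
  induction j with
  | zero => omega
  | succ n ih =>
    rcases hij.eq_or_lt with rfl | hlt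
    · simp [muChain, muChain_of_lt f (Nat.lt_succ_self n)]
    · have hn : ¬ n + 1 < i := by omega
      have hn' : ¬ n + 1 < i + 1 := by omega
      simp [muChain, hn, hn', ih (by omega), Function.comp_assoc]

theorem differentiable_muChain {𝕜 : Type*} [NontriviallyNormedField 𝕜] [NormedAddCommGroup E]
    [NormedSpace 𝕜 E] {f : ℕ → E → E} (hf : ∀ k, Differentiable 𝕜 (f k)) (i j : ℕ) :
    Differentiable 𝕜 (muChain f i j) := by
  induction j with
  | zero => exact differentiable_id
  | succ n ih =>
    unfold muChain
    split_ifs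
    · exact differentiable_id
    · exact (hf (n + 1)).comp ih

end muChain

section Adjoint

variable {𝕜 E F G : Type*} [RCLike 𝕜]
  [NormedAddCommGroup E] [InnerProductSpace 𝕜 E] [CompleteSpace E]
  [NormedAddCommGroup F] [InnerProductSpace 𝕜 F] [CompleteSpace F]
  [NormedAddCommGroup G] [InnerProductSpace 𝕜 G] [CompleteSpace G]

open ContinuousLinearMap in
theorem adjoint_fderiv_comp {ψ : F → G} {φ : E → F} {x : E}
    (hψ : DifferentiableAt 𝕜 ψ (φ x)) (hφ : DifferentiableAt 𝕜 φ x) :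
    adjoint (fderiv 𝕜 (ψ ∘ φ) x) = adjoint (fderiv 𝕜 φ x) ∘L adjoint (fderiv 𝕜 ψ (φ x)) := by
  rw [fderiv_comp x hψ hφ, adjoint_comp]

open ContinuousLinearMap in
theorem adjoint_fderiv_muChain {f : ℕ → E → E} (hf : ∀ k, Differentiable 𝕜 (f k))
    {i j : ℕ} (hi : 0 < i) (hij : i ≤ j) (x : E) :
    adjoint (fderiv 𝕜 (muChain f i j) x) =
      adjoint (fderiv 𝕜 (f i) x) ∘L adjoint (fderiv 𝕜 (muChain f (i + 1) j) (f i x)) := by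
  rw [muChain_eq_comp f hi hij,
    adjoint_fderiv_comp (differentiable_muChain hf _ _ _) (hf i x)]

end Adjoint

open Finset in
theorem stmt_14_general
    {Eh Ex Ey H : Type*}
    [NormedAddCommGroup Eh] [InnerProductSpace ℝ Eh] [FiniteDimensional ℝ Eh]
    [NormedAddCommGroup Ex] [InnerProductSpace ℝ Ex]
    [NormedAddCommGroup Ey] [InnerProductSpace ℝ Ey] [FiniteDimensional ℝ Ey]
    [NormedAddCommGroup H] [InnerProductSpace ℝ H]
    (f : Eh × Ex × H → Eh) (g : Eh → Ey)
    (hf : ContDiff ℝ 1 f)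
    (L : ℕ) (x : ℕ → Ex) (y : ℕ → Ey) (θ : H)
    (hseq : ℕ → Eh) (hrec : ∀ j, hseq (j + 1) = f (hseq j, x (j + 1), θ))
    (eps : ℕ → Eh)
    (heps : ∀ i, eps i =
      ∑ j ∈ Finset.Icc i L,
        ContinuousLinearMap.adjoint
          (fderiv ℝ (muChain (fun k h' => f (h', x k, θ)) (i + 1) j) (hseq i))
          (ContinuousLinearMap.adjoint (fderiv ℝ g (hseq j)) (g (hseq j) - y j)))
    (i : ℕ) (hiL : i ≤ L) :
    eps i =
      ContinuousLinearMap.adjoint (fderiv ℝ (fun h' => f (h', x (i + 1), θ)) (hseq i))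
          (eps (i + 1)) +
        ContinuousLinearMap.adjoint (fderiv ℝ g (hseq i)) (g (hseq i) - y i) := by
  set F : ℕ → Eh → Eh := fun k h' => f (h', x k, θ)
  have hF : ∀ k, Differentiable ℝ (F k) := fun k =>
    (hf.differentiable one_ne_zero).comp (differentiable_id.prodMk (differentiable_const _))
  rw [heps i, heps (i + 1), ← add_sum_Ioc_eq_sum_Icc hiL, ← Icc_add_one_left_eq_Ioc,
    muChain_of_lt F (Nat.lt_succ_self i), map_sum, add_comm]
  congr 1
  · refine sum_congr rfl fun j hj => ?_
    rw [adjoint_fderiv_muChain hF i.succ_pos (mem_Icc.mp hj).1, hrec]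
    rfl
  · rw [fderiv_id, ContinuousLinearMap.adjoint_id]
    rfl

/-- Backpropagation Through Time recurrence.
With transition `fₖ(h) = f(h, xₖ, θ)`, prediction `g`, hidden states `hⱼ` evolving by
`h_{j+1} = f(hⱼ, x_{j+1}, θ)`, `ŷⱼ = g(hⱼ)`, `eⱼ = ŷⱼ − yⱼ`, and backpropagated errors
`εᵢ = Σ_{j=i}^{L} D*μ_{j,i+1}(hᵢ) · D*g(hⱼ) · eⱼ` (so `ε_{L+1} = 0`, the empty sum),
for all `1 ≤ i ≤ L`: `εᵢ = D*f_{i+1}(hᵢ) · ε_{i+1} + D*g(hᵢ) · eᵢ`. -/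
theorem stmt_14
    {Eh Ex Ey H : Type*}
    [NormedAddCommGroup Eh] [InnerProductSpace ℝ Eh] [FiniteDimensional ℝ Eh]
    [NormedAddCommGroup Ex] [InnerProductSpace ℝ Ex] [FiniteDimensional ℝ Ex]
    [NormedAddCommGroup Ey] [InnerProductSpace ℝ Ey] [FiniteDimensional ℝ Ey]
    [NormedAddCommGroup H] [InnerProductSpace ℝ H] [FiniteDimensional ℝ H]
    (f : Eh × Ex × H → Eh) (g : Eh → Ey)
    (hf : ContDiff ℝ 1 f) (hg : ContDiff ℝ 1 g)
    (L : ℕ) (x : ℕ → Ex) (y : ℕ → Ey) (θ : H)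
    (hseq : ℕ → Eh) (hrec : ∀ j, hseq (j + 1) = f (hseq j, x (j + 1), θ))
    (eps : ℕ → Eh)
    (heps : ∀ i, eps i =
      ∑ j ∈ Finset.Icc i L,
        ContinuousLinearMap.adjoint
          (fderiv ℝ (muChain (fun k h' => f (h', x k, θ)) (i + 1) j) (hseq i))
          (ContinuousLinearMap.adjoint (fderiv ℝ g (hseq j)) (g (hseq j) - y j)))
    (i : ℕ) (hi1 : 1 ≤ i) (hiL : i ≤ L) :
    eps i =
      ContinuousLinearMap.adjoint (fderiv ℝ (fun h' => f (h', x (i + 1), θ)) (hseq i))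
          (eps (i + 1)) +
        ContinuousLinearMap.adjoint (fderiv ℝ g (hseq i)) (g (hseq i) - y i) :=
  stmt_14_general f g hf L x y θ hseq hrec eps heps i hiL
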